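/- In the bipartite hexagon model (n = 6, r = sqrt(sec(π/6))), the entangled state Φ_II = [[1/(15r²), 7/10, 2/(3r³)], [7/10, 1/(5r²), 3/(5r)], [2/(3r³), 3/(5r), 1]] exhibits Hardy's nonlocality with Alice's measurements M₁ = (e₄, e₁), M₂ = (e₂, e₅) and Bob's measurements N₁ = (e₄, e₁), N₂ = (e₂, e₅): the zero conditions e₄ᵀ Φ_II e₂ = 0, e₂ᵀ Φ_II e₄ = 0, e₅ᵀ Φ_II e₅ = 0 hold, and the success probability e₄ᵀ Φ_II e₄ equals 1/20. -/
import Mathlib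


open Real Matrix

/-- `r = sqrt(sec(π/6))` for the hexagon model. -/
noncomputable def rH : ℝ := Real.sqrt (1 / Real.cos (Real.pi / 6))

/-- Extremal effects of the hexagon model:
`e_i = (1/2)·(r cos((2i−1)π/6), r sin((2i−1)π/6), 1)ᵀ`. -/
noncomputable def eH (i : ℕ) : Fin 3 → ℝ :=
  (1 / 2 : ℝ) •
    ![rH * Real.cos ((2 * (i : ℝ) - 1) * Real.pi / 6),
      rH * Real.sin ((2 * (i : ℝ) - 1) * Real.pi / 6), 1]

/-- Probability of local effects `E` (Alice) and `F` (Bob) on a bipartite state `Φ`: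
`P_Φ(E,F) = Eᵀ Φ F`. -/
noncomputable def prob (Φ : Matrix (Fin 3) (Fin 3) ℝ) (E F : Fin 3 → ℝ) : ℝ :=
  E ⬝ᵥ Φ.mulVec F

/-- The entangled state `Φ_II` of the bipartite hexagon model. -/
noncomputable def PhiII : Matrix (Fin 3) (Fin 3) ℝ :=
  !![1 / (15 * rH ^ 2), 7 / 10, 2 / (3 * rH ^ 3);
     7 / 10, 1 / (5 * rH ^ 2), 3 / (5 * rH);
     2 / (3 * rH ^ 3), 3 / (5 * rH), 1]

/-- `Φ_II` exhibits Hardy's nonlocality with Alice's measurements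
`M₁ = (e₄, e₁)`, `M₂ = (e₂, e₅)` and Bob's measurements `N₁ = (e₄, e₁)`, `N₂ = (e₂, e₅)`;
the zero conditions hold and the success probability is `1/20`. -/
theorem hexagon_PhiII_hardy :
    prob PhiII (eH 4) (eH 2) = 0 ∧
    prob PhiII (eH 2) (eH 4) = 0 ∧
    prob PhiII (eH 5) (eH 5) = 0 ∧
    prob PhiII (eH 4) (eH 4) = 1 / 20 := by

  have hs3 : Real.sqrt 3 ^ 2 = 3 := Real.sq_sqrt (by norm_num)
  have hs0 : (0:ℝ) < Real.sqrt 3 := Real.sqrt_pos.2 (by norm_num)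
  have hsne : Real.sqrt 3 ≠ 0 := hs0.ne'
  have hr2 : rH ^ 2 = 2 / Real.sqrt 3 := by
    rw [rH, Real.cos_pi_div_six, Real.sq_sqrt (by positivity), one_div_div]
  have hr0 : (0:ℝ) < rH := Real.sqrt_pos.2 (by rw [Real.cos_pi_div_six]; positivity)
  have hrne : rH ≠ 0 := hr0.ne'
  have hr2' : rH ^ 2 * Real.sqrt 3 = 2 := by rw [hr2]; field_simp
  have hr4 : rH ^ 4 = 4 / 3 := by
    have : rH ^ 4 = (rH ^ 2) ^ 2 := by ring
    rw [this, hr2, div_pow, hs3]; norm_num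
  have hr2'' : rH ^ 2 = 2 * Real.sqrt 3 / 3 := by
    rw [hr2]; rw [div_eq_div_iff hsne (by norm_num)]
    nlinarith [hs3]
  have hA : 1 / (15 * rH ^ 2) = Real.sqrt 3 / 30 := by
    rw [div_eq_div_iff (by positivity) (by norm_num)]
    linear_combination (-15) * hr2'
  have hB : 2 / (3 * rH ^ 3) = rH / 2 := by
    rw [div_eq_div_iff (by positivity) (by norm_num)]
    linear_combination (-3) * hr4
  have hC : 1 / (5 * rH ^ 2) = Real.sqrt 3 / 10 := by
    rw [div_eq_div_iff (by positivity) (by norm_num)]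
    linear_combination (-5) * hr2'
  have hD : 3 / (5 * rH) = 3 * Real.sqrt 3 * rH / 10 := by
    rw [div_eq_div_iff (by positivity) (by norm_num)]
    linear_combination (-15) * hr2'
  have a2 : (2 * ((2:ℕ):ℝ) - 1) * Real.pi / 6 = Real.pi / 2 := by push_cast; ring
  have a4 : (2 * ((4:ℕ):ℝ) - 1) * Real.pi / 6 = Real.pi + Real.pi / 6 := by push_cast; ring
  have a5 : (2 * ((5:ℕ):ℝ) - 1) * Real.pi / 6 = Real.pi + Real.pi / 2 := by push_cast; ring
  have c4 : Real.cos (Real.pi + Real.pi/6) = -(Real.sqrt 3/2) := by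
    rw [Real.cos_add, Real.cos_pi, Real.sin_pi, Real.cos_pi_div_six]; ring
  have s4 : Real.sin (Real.pi + Real.pi/6) = -(1/2) := by
    rw [Real.sin_add, Real.cos_pi, Real.sin_pi, Real.sin_pi_div_six]; ring
  have c5 : Real.cos (Real.pi + Real.pi/2) = 0 := by
    rw [Real.cos_add, Real.cos_pi, Real.sin_pi, Real.cos_pi_div_two]; ring
  have s5 : Real.sin (Real.pi + Real.pi/2) = -1 := by
    rw [Real.sin_add, Real.cos_pi, Real.sin_pi, Real.sin_pi_div_two]; ring
  refine ⟨?_, ?_, ?_, ?_⟩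
  · simp only [prob, PhiII, eH, a2, a4, a5, c4, s4, c5, s5, Real.cos_pi_div_two,
      Real.sin_pi_div_two, hA, hB, hC, hD, Matrix.mulVec, dotProduct, Fin.sum_univ_three,
      Matrix.cons_val', Matrix.cons_val_zero, Matrix.cons_val_one, Matrix.head_cons,
      Matrix.empty_val', Matrix.cons_val_fin_one, Matrix.head_fin_const,
      Matrix.cons_val_two, Matrix.tail_cons, Matrix.of_apply, Pi.smul_apply,
      smul_eq_mul]
    linear_combination (-1/8 : ℝ) * hr2'
  · simp only [prob, PhiII, eH, a2, a4, a5, c4, s4, c5, s5, Real.cos_pi_div_two,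
      Real.sin_pi_div_two, hA, hB, hC, hD, Matrix.mulVec, dotProduct, Fin.sum_univ_three,
      Matrix.cons_val', Matrix.cons_val_zero, Matrix.cons_val_one, Matrix.head_cons,
      Matrix.empty_val', Matrix.cons_val_fin_one, Matrix.head_fin_const,
      Matrix.cons_val_two, Matrix.tail_cons, Matrix.of_apply, Pi.smul_apply,
      smul_eq_mul]
    linear_combination (-1/8 : ℝ) * hr2'
  · simp only [prob, PhiII, eH, a2, a4, a5, c4, s4, c5, s5, Real.cos_pi_div_two,
      Real.sin_pi_div_two, hA, hB, hC, hD, Matrix.mulVec, dotProduct, Fin.sum_univ_three,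
      Matrix.cons_val', Matrix.cons_val_zero, Matrix.cons_val_one, Matrix.head_cons,
      Matrix.empty_val', Matrix.cons_val_fin_one, Matrix.head_fin_const,
      Matrix.cons_val_two, Matrix.tail_cons, Matrix.of_apply, Pi.smul_apply,
      smul_eq_mul]
    linear_combination (-1/8 : ℝ) * hr2'
  · simp only [prob, PhiII, eH, a2, a4, a5, c4, s4, c5, s5, Real.cos_pi_div_two,
      Real.sin_pi_div_two, hA, hB, hC, hD, Matrix.mulVec, dotProduct, Fin.sum_univ_three,
      Matrix.cons_val', Matrix.cons_val_zero, Matrix.cons_val_one, Matrix.head_cons,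
      Matrix.empty_val', Matrix.cons_val_fin_one, Matrix.head_fin_const,
      Matrix.cons_val_two, Matrix.tail_cons, Matrix.of_apply, Pi.smul_apply,
      smul_eq_mul]
    linear_combination (-1/10 : ℝ) * hr2' + (rH ^ 2 * Real.sqrt 3 / 480) * hs3
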